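/- For any binary tree T, the number F(T) of maximal green nodes (nodes with outdegree at most 1 having no green strict ancestor) satisfies the recursion F(T) = F(T_L) + F(T_R) + f(T), where f(T) = 1 - F(T_R) if T is nonempty and T_L is empty, f(T) = 1 - F(T_L) if T is nonempty and T_R is empty, and f(T) = 0 otherwise. Consequently F(T) = ∑_{v ∈ T} f(T_v), the sum over all subtrees rooted at nodes of T. -/
import Mathlib


open MeasureTheory

inductive BTree : Type
  | nil : BTree
  | node : BTree → BTree → BTree
deriving DecidableEq

namespace BTree

instance : MeasurableSpace BTree := ⊤

def size : BTree → ℕ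
  | nil => 0
  | node l r => size l + size r + 1

def left : BTree → BTree
  | nil => nil
  | node l _ => l

def right : BTree → BTree
  | nil => nil
  | node _ r => r

/-- The number of maximal green nodes (green = outdegree ≤ 1, maximal = no green
strict ancestor): a green root gives the unique maximal green node. -/
def F : BTree → ℕ
  | nil => 0
  | node l r => if l = nil ∨ r = nil then 1 else F l + F r

/-- The toll function `f(T) = F(T) - F(T_L) - F(T_R)`. -/
def f : BTree → ℤ
  | nil => 0
  | node nil r => 1 - F r
  | node l nil => 1 - F l
  | node _ _ => 0

/-- The list of all subtrees `T_v` rooted at nodes `v` of `T`. -/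
def subtrees : BTree → List BTree
  | nil => []
  | node l r => node l r :: (subtrees l ++ subtrees r)

/-- The root is green: the tree is nonempty and has at most one root child. -/
def greenRoot : BTree → Prop
  | nil => False
  | node l r => l = nil ∨ r = nil

instance : DecidablePred greenRoot := fun t => by
  cases t <;> simp [greenRoot] <;> infer_instance

/-- The random binary search tree with `n` nodes. -/
noncomputable def bst : ℕ → PMF BTree
  | 0 => PMF.pure nil
  | n + 1 =>
    (PMF.uniformOfFintype (Fin (n + 1))).bind fun i =>
      (bst i.val).bind fun l => (bst (n - i.val)).bind fun r => PMF.pure (node l r)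
  decreasing_by
    · exact i.isLt
    · omega

/-- `fchain k T` is the number of green chains of length `k` in `T` starting at the root. -/
def fchain : ℕ → BTree → ℕ
  | 0, _ => 0
  | 1, nil => 0
  | 1, node l r => if l = nil ∨ r = nil then 1 else 0
  | _ + 2, nil => 0
  | k + 2, node l r =>
    if l = nil ∨ r = nil then
      ((subtrees l).map (fun t => fchain (k + 1) t)).sum
        + ((subtrees r).map (fun t => fchain (k + 1) t)).sum
    else 0
  termination_by k _ => k

/-- `Fchain k T` is the total number of green chains of length `k` in `T`. -/
def Fchain (k : ℕ) (T : BTree) : ℕ := ((subtrees T).map (fchain k)).sum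

end BTree

open BTree in
/-- `F(T) = F(T_L) + F(T_R) + f(T)` and `F(T) = ∑_{v ∈ T} f(T_v)`. -/
theorem F_recursion_and_sum (T : BTree) :
    (F T : ℤ) = F (left T) + F (right T) + f T ∧
    (F T : ℤ) = ((subtrees T).map f).sum := by
  induction T with
  | nil => simp [F, f, left, right, subtrees]
  | node l r ihl ihr =>
    have h1 : (F (node l r) : ℤ) = F l + F r + f (node l r) := by
      match l, r with
      | nil, r => simp [F, f]
      | node a b, nil => simp [F, f]
      | node a b, node c d => simp [F, f]
    refine ⟨by simpa [left, right] using h1, ?_⟩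
    simp only [subtrees, List.map_cons, List.map_append, List.sum_cons, List.sum_append]
    rw [← ihl.2, ← ihr.2]
    rw [h1]; ring
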